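/- Let x₁, x₂ ∈ ℂⁿ be distinct, let z be a standard circularly symmetric complex Gaussian vector, y = x₁ + z, c ∈ ℝ with ‖x₁-x₂‖²/2 + c/‖x₁-x₂‖ ≥ 0. Then Pr(‖y - x₁‖² ≥ ‖y - x₂‖² + c) ≤ (1/2) exp(-‖x₁ - x₂‖²/4 - c/2). -/

import Mathlib

open MeasureTheory ProbabilityTheory
open Real NNReal

/-- Standard Gaussian tail function `Q(x) = (1/√(2π)) ∫_x^∞ exp(-t²/2) dt`. -/
noncomputable def gaussQ (x : ℝ) : ℝ :=
  ∫ t in Set.Ioi x, (1 / Real.sqrt (2 * Real.pi)) * Real.exp (-t ^ 2 / 2)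

noncomputable instance (n : ℕ) : MeasurableSpace (EuclideanSpace ℂ (Fin n)) := borel _

instance (n : ℕ) : BorelSpace (EuclideanSpace ℂ (Fin n)) := ⟨rfl⟩

/-- The law of a standard circularly symmetric complex Gaussian vector in `ℂⁿ`:
each component has i.i.d. real and imaginary parts distributed `N(0, 1/2)`. -/
noncomputable def stdCplxGaussian (n : ℕ) : Measure (EuclideanSpace ℂ (Fin n)) :=
  Measure.map
    (fun f => (WithLp.toLp 2 (fun i => Complex.equivRealProd.symm (f i)) : EuclideanSpace ℂ (Fin n)))
    (Measure.pi fun _ : Fin n => (gaussianReal 0 (1 / 2)).prod (gaussianReal 0 (1 / 2)))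

lemma exp_arith (a b z x : ℝ) (ha : 0 < a) (hb : 0 < b) :
    -x^2/(2*a) + -(z-x)^2/(2*b) = -z^2/(2*(a+b)) + -((a+b)/(2*a*b) * (x - a*z/(a+b))^2) := by
  have h1 : a ≠ 0 := ha.ne'
  have h2 : b ≠ 0 := hb.ne'
  have h3 : a + b ≠ 0 := by positivity
  field_simp
  ring

lemma pdf_conv (v₁ v₂ : ℝ≥0) (hv₁ : v₁ ≠ 0) (hv₂ : v₂ ≠ 0) (z : ℝ) :
    ∫ x, gaussianPDFReal 0 v₁ x * gaussianPDFReal 0 v₂ (z - x) =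
      gaussianPDFReal 0 (v₁ + v₂) z := by
  have ha : (0:ℝ) < v₁ := lt_of_le_of_ne v₁.coe_nonneg (by exact_mod_cast (Ne.symm hv₁))
  have hb : (0:ℝ) < v₂ := lt_of_le_of_ne v₂.coe_nonneg (by exact_mod_cast (Ne.symm hv₂))
  have hab : (0:ℝ) < (v₁:ℝ) + v₂ := by linarith
  set k : ℝ := ((v₁:ℝ) + v₂) / (2 * v₁ * v₂) with hk
  have hkpos : 0 < k := by positivity
  set m : ℝ := (v₁:ℝ) * z / ((v₁:ℝ) + v₂) with hm
  set C : ℝ := (√(2 * π * v₁))⁻¹ * (√(2 * π * v₂))⁻¹ * rexp (- z ^ 2 / (2 * ((v₁:ℝ) + v₂)))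
    with hC
  have key : ∀ x, gaussianPDFReal 0 v₁ x * gaussianPDFReal 0 v₂ (z - x)
      = C * rexp (-(k * (x - m) ^ 2)) := by
    intro x
    simp only [gaussianPDFReal, sub_zero, hC]
    conv_lhs => rw [mul_mul_mul_comm, ← Real.exp_add]
    conv_rhs => rw [mul_assoc, ← Real.exp_add]
    rw [exp_arith _ _ z x ha hb, hk, hm]
  calc ∫ x, gaussianPDFReal 0 v₁ x * gaussianPDFReal 0 v₂ (z - x)
      = ∫ x, C * rexp (-(k * (x - m) ^ 2)) := by simp_rw [key]
    _ = C * ∫ x, rexp (-(k * (x - m) ^ 2)) := by rw [integral_const_mul]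
    _ = C * ∫ x, rexp (-(k * x ^ 2)) := by
        rw [integral_sub_right_eq_self (fun y => rexp (-(k * y ^ 2))) m]
    _ = C * √(π / k) := by simp_rw [← neg_mul]; rw [integral_gaussian]
    _ = gaussianPDFReal 0 (v₁ + v₂) z := by
        have hconst : (√(2 * π * (v₁:ℝ)))⁻¹ * (√(2 * π * (v₂:ℝ)))⁻¹ * √(π / k)
            = (√(2 * π * ((v₁:ℝ) + (v₂:ℝ))))⁻¹ := by
          rw [← Real.sqrt_inv, ← Real.sqrt_inv, ← Real.sqrt_mul (by positivity),
            ← Real.sqrt_mul (by positivity), ← Real.sqrt_inv]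
          congr 1
          rw [hk]
          have h2 : (2:ℝ) * π * v₁ ≠ 0 := by positivity
          have h3 : (2:ℝ) * π * v₂ ≠ 0 := by positivity
          field_simp
        simp only [gaussianPDFReal, sub_zero, NNReal.coe_add, hC]
        rw [mul_right_comm, hconst]

lemma gaussianPDFReal_le (v : ℝ≥0) (μ x : ℝ) :
    gaussianPDFReal μ v x ≤ (√(2 * π * v))⁻¹ := by
  rw [gaussianPDFReal]
  refine mul_le_of_le_one_right (by positivity) (Real.exp_le_one_iff.mpr ?_)
  apply div_nonpos_of_nonpos_of_nonneg
  · simpa using sq_nonneg (x - μ)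
  · positivity

lemma gauss_conv (v₁ v₂ : ℝ≥0) :
    Measure.map (fun p : ℝ × ℝ => p.1 + p.2) ((gaussianReal 0 v₁).prod (gaussianReal 0 v₂)) =
      gaussianReal 0 (v₁ + v₂) := by
  rcases eq_or_ne v₁ 0 with rfl | hv₁
  · rw [gaussianReal_zero_var, zero_add]
    exact Measure.dirac_zero_conv (gaussianReal 0 v₂)
  rcases eq_or_ne v₂ 0 with rfl | hv₂
  · rw [gaussianReal_zero_var, add_zero]
    exact Measure.conv_dirac_zero (gaussianReal 0 v₁)
  have hv : v₁ + v₂ ≠ 0 := by positivity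
  have hmadd : Measurable (fun p : ℝ × ℝ => p.1 + p.2) := measurable_fst.add measurable_snd
  ext s hs
  rw [Measure.map_apply hmadd hs, Measure.prod_apply (hmadd hs),
    gaussianReal_apply 0 hv]
  have h1 : ∀ x : ℝ, (gaussianReal 0 v₂) (Prod.mk x ⁻¹' ((fun p : ℝ × ℝ => p.1 + p.2) ⁻¹' s))
      = ∫⁻ z in s, ENNReal.ofReal (gaussianPDFReal 0 v₂ (z - x)) := by
    intro x
    rw [gaussianReal_apply 0 hv₂]
    have hT : MeasurableSet (Prod.mk x ⁻¹' ((fun p : ℝ × ℝ => p.1 + p.2) ⁻¹' s)) :=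
      (measurable_const_add x) hs
    rw [← lintegral_indicator hT, ← lintegral_indicator hs]
    have heq : ∀ y : ℝ, (Prod.mk x ⁻¹' ((fun p : ℝ × ℝ => p.1 + p.2) ⁻¹' s)).indicator
        (gaussianPDF 0 v₂) y
        = s.indicator (fun z => ENNReal.ofReal (gaussianPDFReal 0 v₂ (z - x))) (x + y) := by
      intro y
      by_cases hy : x + y ∈ s
      · rw [Set.indicator_of_mem hy, Set.indicator_of_mem (by simpa using hy)]
        simp [gaussianPDF]
      · rw [Set.indicator_of_notMem hy, Set.indicator_of_notMem (by simpa using hy)]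
    simp_rw [heq]
    exact lintegral_add_left_eq_self _ x
  simp_rw [h1]
  rw [gaussianReal_of_var_ne_zero 0 hv₁, gaussianPDF_def,
    lintegral_withDensity_eq_lintegral_mul _ (measurable_gaussianPDFReal 0 v₁).ennreal_ofReal]
  · simp only [Pi.mul_apply]
    have hmul : ∀ x : ℝ, ENNReal.ofReal (gaussianPDFReal 0 v₁ x) *
          ∫⁻ z in s, ENNReal.ofReal (gaussianPDFReal 0 v₂ (z - x))
        = ∫⁻ z in s, ENNReal.ofReal (gaussianPDFReal 0 v₁ x) *
            ENNReal.ofReal (gaussianPDFReal 0 v₂ (z - x)) := fun x =>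
      (lintegral_const_mul _
        (((measurable_gaussianPDFReal 0 v₂).comp (measurable_id.sub_const x)).ennreal_ofReal)).symm
    simp_rw [hmul]
    rw [lintegral_lintegral_swap
      ((((measurable_gaussianPDFReal 0 v₁).comp measurable_fst).ennreal_ofReal.mul
        (((measurable_gaussianPDFReal 0 v₂).comp
          (measurable_snd.sub measurable_fst)).ennreal_ofReal)).aemeasurable)]
    refine setLIntegral_congr_fun hs fun z _ => ?_
    have hint0 : Integrable (fun x => gaussianPDFReal 0 v₂ (z - x) * gaussianPDFReal 0 v₁ x) := by
      refine (integrable_gaussianPDFReal 0 v₁).bdd_mul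
        ((measurable_gaussianPDFReal 0 v₂).comp
          (measurable_const.sub measurable_id)).aestronglyMeasurable
        (c := (√(2 * π * v₂))⁻¹) (ae_of_all _ fun x => ?_)
      rw [Real.norm_eq_abs, abs_of_nonneg (gaussianPDFReal_nonneg 0 v₂ _)]
      exact gaussianPDFReal_le v₂ 0 _
    have hint : Integrable (fun x => gaussianPDFReal 0 v₁ x * gaussianPDFReal 0 v₂ (z - x)) := by
      simpa [mul_comm] using hint0
    calc ∫⁻ x, ENNReal.ofReal (gaussianPDFReal 0 v₁ x) * ENNReal.ofReal (gaussianPDFReal 0 v₂ (z - x))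
        = ∫⁻ x, ENNReal.ofReal (gaussianPDFReal 0 v₁ x * gaussianPDFReal 0 v₂ (z - x)) := by
          simp_rw [ENNReal.ofReal_mul (gaussianPDFReal_nonneg 0 v₁ _)]
      _ = ENNReal.ofReal (∫ x, gaussianPDFReal 0 v₁ x * gaussianPDFReal 0 v₂ (z - x)) := by
          rw [← ofReal_integral_eq_lintegral_ofReal hint (ae_of_all _ fun x =>
            mul_nonneg (gaussianPDFReal_nonneg 0 v₁ x) (gaussianPDFReal_nonneg 0 v₂ _))]
      _ = gaussianPDF 0 (v₁ + v₂) z := by rw [pdf_conv v₁ v₂ hv₁ hv₂ z]; rfl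
  · exact Measurable.lintegral_prod_right
      ((measurable_gaussianPDFReal 0 v₂).comp (measurable_snd.sub measurable_fst)).ennreal_ofReal

lemma pair_lin (a b : ℝ) :
    Measure.map (fun p : ℝ × ℝ => a * p.1 + b * p.2)
      ((gaussianReal 0 (1/2)).prod (gaussianReal 0 (1/2)))
    = gaussianReal 0 (Real.toNNReal ((a^2 + b^2)/2)) := by
  have h1 : (fun p : ℝ × ℝ => a * p.1 + b * p.2)
      = (fun q : ℝ × ℝ => q.1 + q.2) ∘ (Prod.map (a * ·) (b * ·)) := rfl
  rw [h1, ← Measure.map_map (g := fun q : ℝ × ℝ => q.1 + q.2) (measurable_fst.add measurable_snd)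
      ((measurable_const_mul a).prodMap (measurable_const_mul b)),
    ← Measure.map_prod_map _ _ (measurable_const_mul a) (measurable_const_mul b),
    gaussianReal_map_const_mul, gaussianReal_map_const_mul]
  simp only [mul_zero]
  rw [gauss_conv]
  congr 1
  rw [← NNReal.coe_inj]
  push_cast
  rw [Real.coe_toNNReal _ (by positivity)]
  ring

lemma pi_lin : ∀ (n : ℕ) (w : Fin n → ℝ × ℝ),
    Measure.map (fun f : Fin n → ℝ × ℝ => ∑ i, ((w i).1 * (f i).1 + (w i).2 * (f i).2))
      (Measure.pi fun _ : Fin n => (gaussianReal 0 (1/2)).prod (gaussianReal 0 (1/2)))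
    = gaussianReal 0 (Real.toNNReal (∑ i, ((w i).1^2 + (w i).2^2)/2)) := by
  intro n
  induction n with
  | zero =>
    intro w
    simp only [Finset.univ_eq_empty, Finset.sum_empty, Real.toNNReal_zero,
      gaussianReal_zero_var]
    rw [show (fun _ : Fin 0 → ℝ × ℝ => (0:ℝ)) = fun _ => (0:ℝ) from rfl, Measure.map_const]
    simp
  | succ n ih =>
    intro w
    set μp : Measure (ℝ × ℝ) := (gaussianReal 0 (1/2)).prod (gaussianReal 0 (1/2)) with hμp
    have hmp := (measurePreserving_piFinSuccAbove (fun _ : Fin (n+1) => μp) 0)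
    set e := MeasurableEquiv.piFinSuccAbove (fun _ : Fin (n+1) => ℝ × ℝ) 0 with he
    have hpi : Measure.pi (fun _ : Fin (n+1) => μp)
        = Measure.map e.symm (μp.prod (Measure.pi fun _ : Fin n => μp)) :=
      (hmp.symm e).map_eq.symm
    set L : (Fin (n+1) → ℝ × ℝ) → ℝ :=
      fun f => ∑ i, ((w i).1 * (f i).1 + (w i).2 * (f i).2) with hL
    have hLm : Measurable L := by
      apply Finset.measurable_sum
      intro i _
      exact ((measurable_fst.comp (measurable_pi_apply i)).const_mul _).add
        ((measurable_snd.comp (measurable_pi_apply i)).const_mul _)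
    rw [hpi, Measure.map_map hLm e.symm.measurable]
    have hcomp : L ∘ e.symm = fun q : (ℝ × ℝ) × (Fin n → ℝ × ℝ) =>
        ((w 0).1 * q.1.1 + (w 0).2 * q.1.2) +
          ∑ j : Fin n, ((w j.succ).1 * (q.2 j).1 + (w j.succ).2 * (q.2 j).2) := by
      funext q
      simp only [Function.comp_apply, hL]
      rw [Fin.sum_univ_succ]
      have h0 : e.symm q 0 = q.1 := by
        simp [he, MeasurableEquiv.piFinSuccAbove]
      have hs : ∀ j : Fin n, e.symm q j.succ = q.2 j := by
        intro j
        simp [he, MeasurableEquiv.piFinSuccAbove, Fin.succAbove]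
      simp only [h0, hs]
    rw [hcomp]
    have h2 : (fun q : (ℝ × ℝ) × (Fin n → ℝ × ℝ) =>
        ((w 0).1 * q.1.1 + (w 0).2 * q.1.2) +
          ∑ j : Fin n, ((w j.succ).1 * (q.2 j).1 + (w j.succ).2 * (q.2 j).2))
      = (fun p : ℝ × ℝ => p.1 + p.2) ∘ (Prod.map
          (fun p : ℝ × ℝ => (w 0).1 * p.1 + (w 0).2 * p.2)
          (fun g : Fin n → ℝ × ℝ => ∑ j : Fin n,
            ((w j.succ).1 * (g j).1 + (w j.succ).2 * (g j).2))) := rfl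
    have hAm : Measurable (fun p : ℝ × ℝ => (w 0).1 * p.1 + (w 0).2 * p.2) :=
      (measurable_fst.const_mul _).add (measurable_snd.const_mul _)
    have hBm : Measurable (fun g : Fin n → ℝ × ℝ => ∑ j : Fin n,
        ((w j.succ).1 * (g j).1 + (w j.succ).2 * (g j).2)) := by
      apply Finset.measurable_sum
      intro i _
      exact ((measurable_fst.comp (measurable_pi_apply i)).const_mul _).add
        ((measurable_snd.comp (measurable_pi_apply i)).const_mul _)
    rw [h2, ← Measure.map_map (g := fun p : ℝ × ℝ => p.1 + p.2) (measurable_fst.add measurable_snd) (hAm.prodMap hBm),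
      ← Measure.map_prod_map _ _ hAm hBm, pair_lin, ih (fun j => w j.succ), gauss_conv]
    congr 1
    rw [← NNReal.coe_inj]
    push_cast
    rw [Real.coe_toNNReal _ (by positivity), Real.coe_toNNReal _ (by positivity),
      Real.coe_toNNReal _ (by positivity), Fin.sum_univ_succ]

lemma gauss_half {v : ℝ≥0} (hv : v ≠ 0) : gaussianReal 0 v (Set.Iic 0) = 1/2 := by
  have hneg : (gaussianReal 0 v).map (fun x : ℝ => -x) = gaussianReal 0 v := by
    have : (fun x : ℝ => -x) = ((-1 : ℝ) * ·) := by funext x; ring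
    rw [this, gaussianReal_map_const_mul]
    congr 1
    · norm_num
    · rw [← NNReal.coe_inj]
      push_cast
      norm_num
  have hIci : gaussianReal 0 v (Set.Ici 0) = gaussianReal 0 v (Set.Iic 0) := by
    conv_rhs => rw [← hneg]
    rw [Measure.map_apply measurable_neg measurableSet_Iic]
    congr 1
    ext x
    simp
  have h0 : gaussianReal 0 v {(0:ℝ)} = 0 :=
    (gaussianReal_absolutelyContinuous 0 hv) (by simp)
  have hIoi : gaussianReal 0 v (Set.Ioi 0) = gaussianReal 0 v (Set.Iic 0) := by
    rw [← hIci, ← Set.Ioi_union_left, measure_union _ (measurableSet_singleton 0), h0, add_zero]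
    simp
  have hsum : gaussianReal 0 v (Set.Iic 0) + gaussianReal 0 v (Set.Ioi 0) = 1 := by
    rw [← measure_union (Set.Iic_disjoint_Ioi le_rfl) measurableSet_Ioi, Set.Iic_union_Ioi,
      measure_univ]
  rw [hIoi, ← two_mul] at hsum
  exact (ENNReal.eq_div_iff (by norm_num) (by norm_num)).mpr hsum

lemma gauss_tail {v : ℝ≥0} (hv : v ≠ 0) {r : ℝ} (hr : r ≤ 0) :
    gaussianReal 0 v (Set.Iic r) ≤ ENNReal.ofReal ((1/2) * Real.exp (-r^2/(2*v))) := by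
  have hvpos : (0:ℝ) < v := lt_of_le_of_ne v.coe_nonneg (by exact_mod_cast (Ne.symm hv))
  have hshift : gaussianReal r v (Set.Iic r) = 1/2 := by
    have : (gaussianReal 0 v).map (· + r) = gaussianReal r v := by
      rw [gaussianReal_map_add_const]; norm_num
    rw [← this, Measure.map_apply (measurable_add_const r) measurableSet_Iic]
    have : (· + r) ⁻¹' (Set.Iic r) = Set.Iic 0 := by ext x; simp
    rw [this, gauss_half hv]
  have hbound : ∀ x ∈ Set.Iic r, gaussianPDFReal 0 v x
      ≤ Real.exp (-r^2/(2*v)) * gaussianPDFReal r v x := by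
    intro x hx
    simp only [gaussianPDFReal, sub_zero]
    rw [mul_left_comm, ← Real.exp_add]
    apply mul_le_mul_of_nonneg_left _ (by positivity)
    apply Real.exp_le_exp.mpr
    rw [← add_div, div_le_div_iff_of_pos_right (by positivity)]
    nlinarith [Set.mem_Iic.mp hx]
  calc gaussianReal 0 v (Set.Iic r) = ∫⁻ x in Set.Iic r, ENNReal.ofReal (gaussianPDFReal 0 v x) :=
        gaussianReal_apply 0 hv _
    _ ≤ ∫⁻ x in Set.Iic r, ENNReal.ofReal (Real.exp (-r^2/(2*v)) * gaussianPDFReal r v x) := by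
        refine setLIntegral_mono' measurableSet_Iic fun x hx => ?_
        exact ENNReal.ofReal_le_ofReal (hbound x hx)
    _ = ENNReal.ofReal (Real.exp (-r^2/(2*v))) * ∫⁻ x in Set.Iic r,
          ENNReal.ofReal (gaussianPDFReal r v x) := by
        simp_rw [ENNReal.ofReal_mul (Real.exp_nonneg _)]
        rw [lintegral_const_mul _ (measurable_gaussianPDFReal r v).ennreal_ofReal]
    _ = ENNReal.ofReal (Real.exp (-r^2/(2*v))) * gaussianReal r v (Set.Iic r) := by
        rw [gaussianReal_apply r hv]
        rfl
    _ = ENNReal.ofReal ((1/2) * Real.exp (-r^2/(2*v))) := by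
        rw [hshift, ENNReal.ofReal_mul (by norm_num : (0:ℝ) ≤ 1/2), mul_comm]
        congr 1
        rw [show (1:ℝ)/2 = (2:ℝ)⁻¹ by norm_num, ENNReal.ofReal_inv_of_pos two_pos,
          ENNReal.ofReal_ofNat]
        norm_num

theorem biased_pep_le (n : ℕ) (x₁ x₂ : EuclideanSpace ℂ (Fin n)) (hne : x₁ ≠ x₂)
    (c : ℝ) (hc : 0 ≤ ‖x₁ - x₂‖ ^ 2 / 2 + c / ‖x₁ - x₂‖) :
    stdCplxGaussian n {z | ‖x₁ + z - x₁‖ ^ 2 ≥ ‖x₁ + z - x₂‖ ^ 2 + c} ≤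
      ENNReal.ofReal ((1 / 2) * Real.exp (-‖x₁ - x₂‖ ^ 2 / 4 - c / 2)) := by
  set d : EuclideanSpace ℂ (Fin n) := x₁ - x₂ with hd
  set s : ℝ := ‖d‖ with hsdef
  have hs0 : 0 < s := norm_pos_iff.mpr (sub_ne_zero.mpr hne)
  set φ : (Fin n → ℝ × ℝ) → EuclideanSpace ℂ (Fin n) :=
    fun f => (WithLp.toLp 2 (fun i => Complex.equivRealProd.symm (f i)) : EuclideanSpace ℂ (Fin n)) with hφdef
  set E : Set (EuclideanSpace ℂ (Fin n)) :=
    {z | ‖x₁ + z - x₁‖ ^ 2 ≥ ‖x₁ + z - x₂‖ ^ 2 + c} with hEdef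
  have hφ : Measurable φ := by
    have hcont : Continuous φ := by
      have : Continuous (fun f : Fin n → ℝ × ℝ => (fun i => Complex.equivRealProd.symm (f i) :
          Fin n → ℂ)) := by
        refine continuous_pi fun i => ?_
        simp only [Complex.equivRealProd_symm_apply]
        fun_prop
      exact (PiLp.continuous_toLp 2 _).comp this
    exact hcont.measurable
  have hE : MeasurableSet E := by
    refine measurableSet_le ?_ ?_
    · exact ((continuous_const.add continuous_id').sub continuous_const).norm.pow 2
        |>.add continuous_const |>.measurable
    · exact ((continuous_const.add continuous_id').sub continuous_const).norm.pow 2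
        |>.measurable
  set w : Fin n → ℝ × ℝ := fun i => (2 * (d i).re, 2 * (d i).im) with hw
  set L : (Fin n → ℝ × ℝ) → ℝ :=
    fun f => ∑ i, ((w i).1 * (f i).1 + (w i).2 * (f i).2) with hL
  have hLm : Measurable L := by
    apply Finset.measurable_sum
    intro i _
    exact ((measurable_fst.comp (measurable_pi_apply i)).const_mul _).add
      ((measurable_snd.comp (measurable_pi_apply i)).const_mul _)
  set r : ℝ := -(s^2 + c) with hr
  -- the set identity
  have hset : φ ⁻¹' E = L ⁻¹' (Set.Iic r) := by
    ext f
    simp only [Set.mem_preimage, hEdef, Set.mem_setOf_eq, Set.mem_Iic]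
    have e1 : x₁ + φ f - x₁ = φ f := by abel
    have e2 : x₁ + φ f - x₂ = φ f + d := by rw [hd]; abel
    rw [e1, e2, @norm_add_sq ℂ _ _ _ _ (φ f) d]
    have hinner : RCLike.re (inner ℂ (φ f) d) = ∑ i, ((d i).re * (f i).1 + (d i).im * (f i).2) := by
      rw [PiLp.inner_apply]
      rw [map_sum]
      refine Finset.sum_congr rfl fun i _ => ?_
      simp only [RCLike.inner_apply, hφdef]
      simp [Complex.mul_re, Complex.equivRealProd_symm_apply]
    rw [hinner]
    constructor
    · intro h
      have : 2 * ∑ i, ((d i).re * (f i).1 + (d i).im * (f i).2) + s^2 + c ≤ 0 := by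
        rw [hsdef]; linarith
      rw [hL, hr]
      rw [Finset.mul_sum] at this
      have heq : ∀ i : Fin n, 2 * ((d i).re * (f i).1 + (d i).im * (f i).2)
          = (w i).1 * (f i).1 + (w i).2 * (f i).2 := by intro i; rw [hw]; ring
      simp_rw [heq] at this
      linarith
    · intro h
      rw [hL, hr] at h
      have heq : ∀ i : Fin n, (w i).1 * (f i).1 + (w i).2 * (f i).2
          = 2 * ((d i).re * (f i).1 + (d i).im * (f i).2) := by intro i; rw [hw]; ring
      simp_rw [heq, ← Finset.mul_sum] at h
      have : ‖d‖ = s := hsdef.symm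
      nlinarith [h]
  -- variance computation
  have hnormsq : s^2 = ∑ i, ((d i).re^2 + (d i).im^2) := by
    rw [hsdef, EuclideanSpace.norm_eq, Real.sq_sqrt (by positivity)]
    refine Finset.sum_congr rfl fun i _ => ?_
    rw [Complex.sq_norm, Complex.normSq_apply]
    ring
  have hVsum : (∑ i, ((w i).1^2 + (w i).2^2)/2) = 2 * s^2 := by
    rw [hnormsq, Finset.mul_sum]
    refine Finset.sum_congr rfl fun i _ => ?_
    rw [hw]
    ring
  -- main chain
  have hmain : stdCplxGaussian n E = gaussianReal 0 (Real.toNNReal (2 * s^2)) (Set.Iic r) := by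
    rw [stdCplxGaussian, Measure.map_apply hφ hE, hset, ← Measure.map_apply hLm measurableSet_Iic,
      hL, pi_lin n w, hVsum]
  rw [hmain]
  clear_value s r
  clear hset hmain hnormsq hVsum hLm hL hw hφ hφdef hEdef hE
  clear L w φ E
  clear hsdef hd d hne x₁ x₂
  have hVne : Real.toNNReal (2 * s^2) ≠ 0 := by
    rw [ne_eq, Real.toNNReal_eq_zero]
    push_neg
    positivity
  have hVcoe : ((Real.toNNReal (2 * s^2) : ℝ≥0) : ℝ) = 2 * s^2 :=
    Real.coe_toNNReal _ (by positivity)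
  by_cases hcase : 0 ≤ s^2 + c
  · have hrle : r ≤ 0 := by rw [hr]; linarith
    refine le_trans (gauss_tail hVne hrle) (ENNReal.ofReal_le_ofReal ?_)
    have hexp : -r^2/(2 * ((Real.toNNReal (2 * s^2) : ℝ≥0) : ℝ)) ≤ -s^2/4 - c/2 := by
      rw [hVcoe, hr]
      rw [div_le_iff₀ (by positivity)]
      nlinarith [sq_nonneg c, sq_nonneg (s^2 + c)]
    have := Real.exp_le_exp.mpr hexp
    nlinarith [Real.exp_pos (-r^2/(2 * ((Real.toNNReal (2 * s^2) : ℝ≥0) : ℝ)))]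
  · push_neg at hcase
    have hcges : -(s^3)/2 ≤ c := by
      have h1 : s * (s^2/2 + c/s) = s^3/2 + c := by field_simp
      have h2 : 0 ≤ s * (s^2/2 + c/s) := mul_nonneg hs0.le hc
      rw [h1] at h2
      linarith
    have hs2 : 2 < s := by nlinarith [mul_pos hs0 hs0, hs0]
    have h14 : (1:ℝ) < s^2/4 := by nlinarith [sq_nonneg (s - 2)]
    have hlog2 : Real.log 2 < 1 := by
      have := Real.log_two_lt_d9
      linarith
    have hlog : Real.log 2 ≤ -s^2/4 - c/2 := by linarith
    refine le_trans (prob_le_one) ?_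
    rw [← ENNReal.ofReal_one]
    apply ENNReal.ofReal_le_ofReal
    have h2 : (2:ℝ) ≤ Real.exp (-s^2/4 - c/2) := by
      calc (2:ℝ) = Real.exp (Real.log 2) := (Real.exp_log two_pos).symm
        _ ≤ _ := Real.exp_le_exp.mpr hlog
    linarith
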